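/- arXiv:1810.08455 — 2 statements merged into one kernel-verified Lean document; each statement's English description precedes it below -/
import Mathlib

section
/- Let X be a real Hilbert space, g : X → X a κ-contraction with 0 ≤ κ < 1, and x_{j−2}, x_{j−1} ∈ X. Set w_{j−1} := g(x_{j−2}) − x_{j−2}, w_j := g(x_{j−1}) − x_{j−1} and e_{j−1} := x_{j−1} − x_{j−2}, and assume w_j ≠ w_{j−1}. If γ ∈ ℝ minimizes the function γ ↦ ‖w_j − γ(w_j − w_{j−1})‖ over ℝ, then |γ| · ‖e_{j−1}‖ ≤ (1 − κ)^{−1} ‖w_j‖. (This is the bound |α^j_{j−2}|‖e_{j−1}‖ ≤ (1−κ)^{−1}‖w_j‖ for the depth m = 1 Anderson optimization problem, whose constrained form minimizes ‖α_{j−2} w_{j−1} + α_{j−1} w_j‖ over α_{j−2} + α_{j−1} = 1 with α_{j−2} = γ.) -/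
/-!
The minimizer `γ` makes `w_j - γ d` orthogonal to `d := w_j - w_{j-1}`, so by Pythagoras
`|γ| ‖d‖ ≤ ‖w_j‖`. On the other hand `d = (g x_{j-1} - g x_{j-2}) - e_{j-1}`, and the contraction
property gives `(1 - κ) ‖e_{j-1}‖ ≤ ‖d‖`.
-/

open RealInnerProductSpace

section Minimizer

variable {F : Type*} [NormedAddCommGroup F] [InnerProductSpace ℝ F]

theorem inner_sub_smul_self_eq_zero_of_forall_norm_le {w d : F} {γ : ℝ}
    (hmin : ∀ t : ℝ, ‖w - γ • d‖ ≤ ‖w - t • d‖) : ⟪w - γ • d, d⟫ = 0 := by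
  rcases eq_or_ne d 0 with rfl | hd
  · exact inner_zero_right _
  set r := w - γ • d
  set c := ⟪r, d⟫
  have hD : 0 < ‖d‖ ^ 2 := by positivity
  -- Moving from `γ` by `s := c / ‖d‖²` would decrease the squared norm by `c² / ‖d‖²`.
  set s := c / ‖d‖ ^ 2
  have hstep : w - (γ + s) • d = r - s • d := by rw [add_smul, sub_add_eq_sub_sub]
  have hexpand : ‖r - s • d‖ ^ 2 = ‖r‖ ^ 2 - 2 * (s * c) + s ^ 2 * ‖d‖ ^ 2 := by
    rw [norm_sub_sq_real, real_inner_smul_right, norm_smul, mul_pow, Real.norm_eq_abs, sq_abs]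
  have hsq : ‖r‖ ^ 2 ≤ ‖r - s • d‖ ^ 2 := by
    rw [← hstep]
    exact pow_le_pow_left₀ (norm_nonneg _) (hmin (γ + s)) 2
  have hsD : s * ‖d‖ ^ 2 = c := div_mul_cancel₀ c hD.ne'
  have hs : s = 0 := by
    have hsc : s ^ 2 * ‖d‖ ^ 2 = s * c := by rw [← hsD]; ring
    have : s ^ 2 * ‖d‖ ^ 2 ≤ 0 := by linarith
    exact pow_eq_zero_iff two_ne_zero |>.mp
      (le_antisymm (nonpos_of_mul_nonpos_left this hD) (sq_nonneg s))
  rw [← hsD, hs, zero_mul]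

theorem abs_mul_norm_le_of_forall_norm_le {w d : F} {γ : ℝ}
    (hmin : ∀ t : ℝ, ‖w - γ • d‖ ≤ ‖w - t • d‖) : |γ| * ‖d‖ ≤ ‖w‖ := by
  have horth : ⟪w - γ • d, γ • d⟫ = 0 := by
    rw [real_inner_smul_right, inner_sub_smul_self_eq_zero_of_forall_norm_le hmin, mul_zero]
  have hpyth := norm_add_sq_eq_norm_sq_add_norm_sq_real horth
  rw [sub_add_cancel] at hpyth
  rw [← Real.norm_eq_abs, ← norm_smul]
  exact pow_le_pow_iff_left₀ (norm_nonneg _) (norm_nonneg _) two_ne_zero |>.mp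
    (by nlinarith [sq_nonneg ‖w - γ • d‖])

end Minimizer

theorem one_sub_mul_norm_sub_le_norm_sub_sub {E : Type*} [SeminormedAddCommGroup E]
    {g : E → E} {κ : ℝ} {x y : E} (hg : ‖g x - g y‖ ≤ κ * ‖x - y‖) :
    (1 - κ) * ‖x - y‖ ≤ ‖(g x - x) - (g y - y)‖ := by
  have hrw : (g x - x) - (g y - y) = (g x - g y) - (x - y) := by abel
  rw [hrw, norm_sub_rev (g x - g y)]
  linarith [norm_sub_norm_le (x - y) (g x - g y)]

theorem stmt_3_general {X : Type*} [NormedAddCommGroup X] [InnerProductSpace ℝ X]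
    (g : X → X) (κ : ℝ) (hκ1 : κ < 1)
    (hg : ∀ x y : X, ‖g y - g x‖ ≤ κ * ‖x - y‖)
    (xjm2 xjm1 : X)
    (wjm1 wj : X) (hwjm1 : wjm1 = g xjm2 - xjm2) (hwj : wj = g xjm1 - xjm1)
    (γ : ℝ)
    (hmin : ∀ t : ℝ, ‖wj - γ • (wj - wjm1)‖ ≤ ‖wj - t • (wj - wjm1)‖) :
    |γ| * ‖xjm1 - xjm2‖ ≤ (1 - κ)⁻¹ * ‖wj‖ := by
  have hlower : (1 - κ) * ‖xjm1 - xjm2‖ ≤ ‖wj - wjm1‖ := by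
    rw [hwj, hwjm1]
    exact one_sub_mul_norm_sub_le_norm_sub_sub
      (by simpa only [norm_sub_rev xjm2] using hg xjm2 xjm1)
  have hupper := abs_mul_norm_le_of_forall_norm_le hmin
  rw [le_inv_mul_iff₀ (sub_pos.mpr hκ1)]
  calc (1 - κ) * (|γ| * ‖xjm1 - xjm2‖) = |γ| * ((1 - κ) * ‖xjm1 - xjm2‖) := by ring
    _ ≤ |γ| * ‖wj - wjm1‖ := mul_le_mul_of_nonneg_left hlower (abs_nonneg γ)
    _ ≤ ‖wj‖ := hupper

/-- depth `m = 1` Anderson bound `|γ| ‖e_{j-1}‖ ≤ (1-κ)⁻¹ ‖w_j‖`,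
where `γ` minimizes `γ ↦ ‖w_j - γ (w_j - w_{j-1})‖` over `ℝ`. -/
theorem stmt_3 {X : Type*} [NormedAddCommGroup X] [InnerProductSpace ℝ X] [CompleteSpace X]
    (g : X → X) (κ : ℝ) (hκ0 : 0 ≤ κ) (hκ1 : κ < 1)
    (hg : ∀ x y : X, ‖g y - g x‖ ≤ κ * ‖x - y‖)
    (xjm2 xjm1 : X)
    (wjm1 wj : X) (hwjm1 : wjm1 = g xjm2 - xjm2) (hwj : wj = g xjm1 - xjm1)
    (hne : wj ≠ wjm1)
    (γ : ℝ)
    (hmin : ∀ t : ℝ, ‖wj - γ • (wj - wjm1)‖ ≤ ‖wj - t • (wj - wjm1)‖) :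
    |γ| * ‖xjm1 - xjm2‖ ≤ (1 - κ)⁻¹ * ‖wj‖ :=
  stmt_3_general g κ hκ1 hg xjm2 xjm1 wjm1 wj hwjm1 hwj γ hmin
end

section
/- Fix a depth m ≥ 1. For all κ, κ̂, M, c with 0 < κ < 1, κ̂ > 0, M > 0, c > 0, there exists a constant C = C(m, κ, κ̂, M, c) > 0 with the following property. Let X be a real Hilbert space, g : X → X twice continuously Fréchet differentiable with ‖g′(y; u)‖ ≤ κ‖u‖ and ‖g″(y; u, v)‖ ≤ κ̂‖u‖‖v‖ for all y, u, v, and a κ-contraction. Let (x_k) be any sequence generated by Anderson acceleration of depth m with damping factors 0 < β_k ≤ 1 (i.e., at each step k the coefficients (α^k_{k−m−1}, …, α^k_{k−1}) minimize ‖Σ_{j=k−m−1}^{k−1} α_j w_{j+1}‖ subject to Σ_j α_j = 1, and x_k = (1 − β_{k−1}) Σ_j α^k_j x_j + β_{k−1} Σ_j α^k_j g(x_j)), with residuals w_n := g(x_{n−1}) − x_{n−1} all nonzero and consecutive residual differences nonzero. If at step k the optimization coefficients at levels k and k+1 are all bounded in absolute value by M, and |α^k_{k−1}| ≥ c, |α^{k+1}_k|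 ≥ c, and |1 − α^k_{k−m−1}| ≥ c, then ‖w_{k+1}‖ ≤ θ_k ( (1 − β_{k−1}) + κ β_{k−1} ) ‖w_k‖ + C Σ_{j=0}^{m} ‖w_{k−j}‖², where θ_k := ‖Σ_{j=k−m−1}^{k−1} α^k_j w_{j+1}‖ / ‖w_k‖ is the stage-k optimization gain. -/
/-!
The residual `w_{k+1} = g(x_k) - x_k` splits, with `W := Σ α_j w_{j+1}` and
`x_k = Σ α_j x_j + β W`, as `(1 - β) W + β g'(x_k) W - Σ α_j R_j`, where
`R_j = g(x_j) - g(x_k) - g'(x_k)(x_j - x_k)` is a second-order Taylor remainder, so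
`‖R_j‖ ≤ κ̂ ‖x_j - x_k‖²`. The first two terms give `θ_k ((1 - β) + κ β) ‖w_k‖`.
For the remainders, the contraction property bounds consecutive differences of iterates by
neighbouring residuals, `‖x_l - x_{l-1}‖ ≤ (‖w_{l+1}‖ + ‖w_l‖) / (1 - κ)`, and optimality of `α`
gives `‖W‖ ≤ ‖w_k‖`; together with `|α_j| ≤ M` this bounds every `‖x_j - x_k‖` in the window
by a multiple of `Σ_{j ≤ m} ‖w_{k-j}‖`, whose square is at most `(m + 1) Σ_{j ≤ m} ‖w_{k-j}‖²`.
-/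

open Finset

section Calculus

variable {E F : Type*} [NormedAddCommGroup E] [NormedSpace ℝ E]
  [NormedAddCommGroup F] [NormedSpace ℝ F]

theorem norm_fderiv_sub_le_of_norm_fderiv_fderiv_le {g : E → F} (hg : ContDiff ℝ 2 g) {L : ℝ}
    (hL : 0 ≤ L) (h2 : ∀ y u v, ‖fderiv ℝ (fderiv ℝ g) y u v‖ ≤ L * ‖u‖ * ‖v‖) (p q : E) :
    ‖fderiv ℝ g q - fderiv ℝ g p‖ ≤ L * ‖q - p‖ := by
  have hdiff : Differentiable ℝ (fderiv ℝ g) :=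
    (hg.fderiv_right (m := 1) (by norm_num)).differentiable (by norm_num)
  have hbound : ∀ y, ‖fderiv ℝ (fderiv ℝ g) y‖ ≤ L := fun y =>
    ContinuousLinearMap.opNorm_le_bound _ hL fun u =>
      ContinuousLinearMap.opNorm_le_bound _ (by positivity) (h2 y u)
  exact convex_univ.norm_image_sub_le_of_norm_fderiv_le (fun z _ => hdiff z)
    (fun z _ => hbound z) (Set.mem_univ p) (Set.mem_univ q)

theorem norm_sub_sub_fderiv_le_of_norm_fderiv_fderiv_le {g : E → F} (hg : ContDiff ℝ 2 g)
    {L : ℝ} (hL : 0 ≤ L) (h2 : ∀ y u v, ‖fderiv ℝ (fderiv ℝ g) y u v‖ ≤ L * ‖u‖ * ‖v‖)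
    (a b : E) : ‖g a - g b - fderiv ℝ g b (a - b)‖ ≤ L * ‖a - b‖ ^ 2 := by
  have hball : ∀ z ∈ Metric.closedBall b ‖a - b‖, ‖fderiv ℝ g z - fderiv ℝ g b‖ ≤ L * ‖a - b‖ :=
    fun z hz => (norm_fderiv_sub_le_of_norm_fderiv_fderiv_le hg hL h2 b z).trans
      (mul_le_mul_of_nonneg_left (mem_closedBall_iff_norm.1 hz) hL)
  calc ‖g a - g b - fderiv ℝ g b (a - b)‖ ≤ L * ‖a - b‖ * ‖a - b‖ :=
        (convex_closedBall b _).norm_image_sub_le_of_norm_fderiv_le'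
          (fun z _ => (hg.differentiable (by norm_num)) z) hball
          (Metric.mem_closedBall_self (norm_nonneg _)) (mem_closedBall_iff_norm.2 le_rfl)
    _ = L * ‖a - b‖ ^ 2 := by ring

end Calculus

theorem norm_sub_le_of_contraction {E : Type*} [NormedAddCommGroup E] {g : E → E} {κ : ℝ}
    (hκ : κ < 1) (hg : ∀ x y, ‖g y - g x‖ ≤ κ * ‖x - y‖) (p q : E) :
    ‖p - q‖ ≤ (‖g p - p‖ + ‖g q - q‖) / (1 - κ) := by
  rw [le_div_iff₀ (sub_pos.2 hκ)]
  have htri : ‖p - q‖ ≤ ‖g p - g q‖ + ‖p - g p‖ + ‖g q - q‖ :=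
    calc ‖p - q‖ = ‖(g p - g q) + (p - g p) + (g q - q)‖ := by congr 1; abel
      _ ≤ ‖g p - g q‖ + ‖p - g p‖ + ‖g q - q‖ := norm_add₃_le
  have hgpq := hg q p
  rw [norm_sub_rev q p] at hgpq
  rw [norm_sub_rev p (g p)] at htri
  linarith

section AffineCombination

variable {E : Type*} [NormedAddCommGroup E] [NormedSpace ℝ E] {ι : Type*}

theorem sum_smul_sub_eq {s : Finset ι} {a : ι → ℝ} (ha : ∑ i ∈ s, a i = 1) (y : ι → E) (z : E) :
    ∑ i ∈ s, a i • (y i - z) = ∑ i ∈ s, a i • y i - z := by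
  simp only [smul_sub, sum_sub_distrib, ← sum_smul, ha, one_smul]

noncomputable def andersonMix (s : Finset ι) (a : ι → ℝ) (g : E → E) (y : ι → E) (β : ℝ) : E :=
  (1 - β) • ∑ i ∈ s, a i • y i + β • ∑ i ∈ s, a i • g (y i)

theorem andersonMix_eq_add_smul (s : Finset ι) (a : ι → ℝ) (g : E → E) (y : ι → E) (β : ℝ) :
    andersonMix s a g y β = ∑ i ∈ s, a i • y i + β • ∑ i ∈ s, a i • (g (y i) - y i) := by
  simp only [andersonMix, smul_sub, sum_sub_distrib]
  module

theorem norm_sum_smul_le_of_forall_sum_eq_one_le [DecidableEq ι] {s : Finset ι} {a : ι → ℝ}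
    {v : ι → E} (hmin : ∀ b : ι → ℝ, ∑ i ∈ s, b i = 1 → ‖∑ i ∈ s, a i • v i‖ ≤ ‖∑ i ∈ s, b i • v i‖)
    {i : ι} (hi : i ∈ s) : ‖∑ j ∈ s, a j • v j‖ ≤ ‖v i‖ := by
  simpa [Pi.single_apply, hi] using hmin (Pi.single i 1) (by simp [hi])

theorem norm_sub_le_of_eq_andersonMix {s : Finset ι} {a : ι → ℝ}
    (ha : ∑ i ∈ s, a i = 1) {g : E → E} (y : ι → E) {β κ : ℝ} (hβ0 : 0 ≤ β) (hβ1 : β ≤ 1)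
    {x' : E} (hx' : x' = andersonMix s a g y β)
    (T : E →L[ℝ] E) (hT : ∀ u, ‖T u‖ ≤ κ * ‖u‖) :
    ‖g x' - x'‖ ≤ ((1 - β) + κ * β) * ‖∑ i ∈ s, a i • (g (y i) - y i)‖ +
      ∑ i ∈ s, |a i| * ‖g (y i) - g x' - T (y i - x')‖ := by
  set W := ∑ i ∈ s, a i • (g (y i) - y i)
  have hx'W : x' = ∑ i ∈ s, a i • y i + β • W := by
    rw [hx', andersonMix_eq_add_smul]
  have hR : ∑ i ∈ s, a i • (g (y i) - g x' - T (y i - x')) =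
      ∑ i ∈ s, a i • y i + W - g x' + β • T W := by
    have hgy : ∑ i ∈ s, a i • g (y i) = ∑ i ∈ s, a i • y i + W := by
      simp only [W, smul_sub, sum_sub_distrib]; abel
    simp only [smul_sub, sum_sub_distrib, ← sum_smul, ha, one_smul, ← map_smul, ← map_sum,
      hgy]
    rw [hx'W, sub_add_cancel_left, map_neg, sub_neg_eq_add]
  have hsplit : g x' - x' =
      (1 - β) • W + β • T W - ∑ i ∈ s, a i • (g (y i) - g x' - T (y i - x')) := by
    rw [hR, hx'W]; module
  have hsum : ‖∑ i ∈ s, a i • (g (y i) - g x' - T (y i - x'))‖ ≤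
      ∑ i ∈ s, |a i| * ‖g (y i) - g x' - T (y i - x')‖ :=
    (norm_sum_le _ _).trans_eq (by simp only [norm_smul, Real.norm_eq_abs])
  calc ‖g x' - x'‖ ≤ ‖(1 - β) • W‖ + ‖β • T W‖ +
        ‖∑ i ∈ s, a i • (g (y i) - g x' - T (y i - x'))‖ := by
        rw [hsplit]; exact (norm_sub_le _ _).trans (add_le_add_left (norm_add_le _ _) _)
    _ ≤ (1 - β) * ‖W‖ + β * (κ * ‖W‖) + ∑ i ∈ s, |a i| * ‖g (y i) - g x' - T (y i - x')‖ := by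
        rw [norm_smul, norm_smul, Real.norm_of_nonneg (sub_nonneg.2 hβ1), Real.norm_of_nonneg hβ0]
        gcongr
        exact hT W
    _ = _ := by ring

end AffineCombination

theorem sum_range_add_succ_le {r : ℕ → ℝ} (hr : ∀ i, 0 ≤ r i) {n m : ℕ} (hn : n ≤ m) :
    ∑ i ∈ range n, (r i + r (i + 1)) ≤ 2 * ∑ i ∈ range (m + 1), r i := by
  have hmono : ∀ {l}, l ≤ m + 1 → ∑ i ∈ range l, r i ≤ ∑ i ∈ range (m + 1), r i := fun hl =>
    sum_le_sum_of_subset_of_nonneg (range_subset_range.2 hl) fun i _ _ => hr i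
  have hshift : ∑ i ∈ range n, r (i + 1) ≤ ∑ i ∈ range (n + 1), r i := by
    rw [sum_range_succ']; linarith [hr 0]
  rw [sum_add_distrib, two_mul]
  exact add_le_add (hmono (by omega)) (hshift.trans (hmono (by omega)))

theorem sum_abs_mul_le_of_le_mul_sq_sum {ι ι' : Type*} (s : Finset ι) (t : Finset ι')
    {a f : ι → ℝ} {r : ι' → ℝ} {M L : ℝ} (hL : 0 ≤ L) (hM0 : 0 ≤ M)
    (hM : ∀ i ∈ s, |a i| ≤ M) (hf : ∀ i ∈ s, 0 ≤ f i ∧ f i ≤ L * (∑ j ∈ t, r j) ^ 2) :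
    ∑ i ∈ s, |a i| * f i ≤ #s * #t * M * L * ∑ j ∈ t, r j ^ 2 :=
  calc ∑ i ∈ s, |a i| * f i ≤ ∑ i ∈ s, M * (L * (∑ j ∈ t, r j) ^ 2) := by
        gcongr with i hi
        exacts [(hf i hi).1, hM i hi, (hf i hi).2]
    _ = #s * M * L * (∑ j ∈ t, r j) ^ 2 := by rw [sum_const, nsmul_eq_mul]; ring
    _ ≤ #s * M * L * (#t * ∑ j ∈ t, r j ^ 2) := by gcongr; exact sq_sum_le_card_mul_sum_sq
    _ = #s * #t * M * L * ∑ j ∈ t, r j ^ 2 := by ring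

section AndersonWindow

variable {E : Type*} [NormedAddCommGroup E] {g : E → E} {κ : ℝ} {x w : ℤ → E}

theorem card_Icc_sub_sub_one (k : ℤ) (m : ℕ) : #(Icc (k - m - 1) (k - 1)) = m + 1 := by
  rw [Int.card_Icc]; omega

theorem norm_sub_le_two_mul_sum_of_mem_Icc (hκ : κ < 1) (hg : ∀ x y, ‖g y - g x‖ ≤ κ * ‖x - y‖)
    (hw : ∀ n, w n = g (x (n - 1)) - x (n - 1)) {m : ℕ} {k j : ℤ}
    (hj : j ∈ Icc (k - m - 1) (k - 1)) :
    ‖x j - x (k - 1)‖ ≤ 2 * (∑ i ∈ range (m + 1), ‖w (k - i)‖) / (1 - κ) := by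
  obtain ⟨n, hnm, rfl⟩ : ∃ n : ℕ, n ≤ m ∧ j = k - 1 - n := by
    rw [mem_Icc] at hj; exact ⟨(k - 1 - j).toNat, by omega, by omega⟩
  have hstep (i : ℕ) : dist (x (k - 1 - i)) (x (k - 1 - (i + 1 : ℕ))) ≤
      (‖w (k - i)‖ + ‖w (k - (i + 1 : ℕ))‖) / (1 - κ) := by
    rw [dist_eq_norm, hw, hw]
    convert norm_sub_le_of_contraction hκ hg _ _ using 6 <;> push_cast <;> ring_nf
  calc ‖x (k - 1 - n) - x (k - 1)‖ = dist (x (k - 1 - (0 : ℕ))) (x (k - 1 - n)) := by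
        rw [dist_comm, dist_eq_norm, Nat.cast_zero, sub_zero]
    _ ≤ ∑ i ∈ range n, dist (x (k - 1 - i)) (x (k - 1 - (i + 1 : ℕ))) :=
        dist_le_range_sum_dist (fun i : ℕ => x (k - 1 - i)) n
    _ ≤ ∑ i ∈ range n, (‖w (k - i)‖ + ‖w (k - (i + 1 : ℕ))‖) / (1 - κ) :=
        sum_le_sum fun i _ => hstep i
    _ ≤ 2 * (∑ i ∈ range (m + 1), ‖w (k - i)‖) / (1 - κ) := by
        rw [← sum_div]
        gcongr
        exact sum_range_add_succ_le (r := fun i : ℕ => ‖w (k - i)‖) (fun _ => norm_nonneg _) hnm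

theorem norm_sub_le_of_mem_Icc_of_eq_andersonMix [NormedSpace ℝ E] (hκ : κ < 1)
    (hg : ∀ x y, ‖g y - g x‖ ≤ κ * ‖x - y‖) (hw : ∀ n, w n = g (x (n - 1)) - x (n - 1))
    {m : ℕ} {k : ℤ} {a : ℤ → ℝ} {β M : ℝ} (ha : ∑ j ∈ Icc (k - m - 1) (k - 1), a j = 1)
    (hM : ∀ j ∈ Icc (k - m - 1) (k - 1), |a j| ≤ M) (hβ0 : 0 ≤ β) (hβ1 : β ≤ 1)
    (hx : x k = andersonMix (Icc (k - m - 1) (k - 1)) a g x β)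
    (hW : ‖∑ j ∈ Icc (k - m - 1) (k - 1), a j • w (j + 1)‖ ≤ ‖w k‖)
    {j : ℤ} (hj : j ∈ Icc (k - m - 1) (k - 1)) :
    ‖x j - x k‖ ≤ ∑ i ∈ range (m + 1), ‖w (k - i)‖ +
      (1 + (m + 1) * M) * (2 * (∑ i ∈ range (m + 1), ‖w (k - i)‖) / (1 - κ)) := by
  set I := Icc (k - m - 1) (k - 1)
  set S := ∑ i ∈ range (m + 1), ‖w (k - i)‖
  set D := 2 * S / (1 - κ)
  have hwk : ‖w k‖ ≤ S := by
    simpa using single_le_sum (f := fun i : ℕ => ‖w (k - i)‖) (fun _ _ => norm_nonneg _)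
      (mem_range.2 m.succ_pos)
  have hres : ∀ i, g (x i) - x i = w (i + 1) := fun i => by simp [hw]
  have hxk : x k - x (k - 1) = β • ∑ i ∈ I, a i • w (i + 1) + ∑ i ∈ I, a i • (x i - x (k - 1)) := by
    rw [hx, andersonMix_eq_add_smul, sum_smul_sub_eq ha]
    simp only [hres]
    abel
  have hlast : ‖x k - x (k - 1)‖ ≤ S + (m + 1) * M * D :=
    calc ‖x k - x (k - 1)‖ ≤ β * ‖w k‖ + ∑ i ∈ I, |a i| * ‖x i - x (k - 1)‖ := by
          rw [hxk]
          refine (norm_add_le _ _).trans (add_le_add ?_ ?_)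
          · rw [norm_smul, Real.norm_of_nonneg hβ0]; gcongr
          · exact (norm_sum_le _ _).trans_eq (by simp only [norm_smul, Real.norm_eq_abs])
      _ ≤ 1 * S + ∑ i ∈ I, M * D := by
          gcongr with i hi
          · exact (abs_nonneg _).trans (hM i hi)
          · exact hM i hi
          · exact norm_sub_le_two_mul_sum_of_mem_Icc hκ hg hw hi
      _ = S + (m + 1) * M * D := by
          rw [sum_const, card_Icc_sub_sub_one, nsmul_eq_mul]; push_cast; ring
  calc ‖x j - x k‖ ≤ ‖x j - x (k - 1)‖ + ‖x k - x (k - 1)‖ := by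
        rw [norm_sub_rev (x k)]; exact norm_sub_le_norm_sub_add_norm_sub _ _ _
    _ ≤ D + (S + (m + 1) * M * D) :=
        add_le_add (norm_sub_le_two_mul_sum_of_mem_Icc hκ hg hw hj) hlast
    _ = S + (1 + (m + 1) * M) * D := by ring

end AndersonWindow

theorem stmt_19_general (m : ℕ) (κ κh M c : ℝ) (hκ1 : κ < 1)
    (hκh : 0 < κh) (hM : 0 < M) :
    ∃ C : ℝ, 0 < C ∧
      ∀ (X : Type) [NormedAddCommGroup X] [InnerProductSpace ℝ X] [CompleteSpace X],
      ∀ g : X → X,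
        ContDiff ℝ 2 g →
        (∀ y u : X, ‖fderiv ℝ g y u‖ ≤ κ * ‖u‖) →
        (∀ y u v : X, ‖fderiv ℝ (fderiv ℝ g) y u v‖ ≤ κh * ‖u‖ * ‖v‖) →
        (∀ x y : X, ‖g y - g x‖ ≤ κ * ‖x - y‖) →
        ∀ (x w : ℤ → X) (α : ℤ → ℤ → ℝ) (β : ℤ → ℝ),
        (∀ n, w n = g (x (n - 1)) - x (n - 1)) →
        (∀ i, 0 < β i ∧ β i ≤ 1) →
        (∀ i, ∑ j ∈ Finset.Icc (i - (m : ℤ) - 1) (i - 1), α i j = 1) →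
        (∀ (i : ℤ) (b : ℤ → ℝ), ∑ j ∈ Finset.Icc (i - (m : ℤ) - 1) (i - 1), b j = 1 →
          ‖∑ j ∈ Finset.Icc (i - (m : ℤ) - 1) (i - 1), α i j • w (j + 1)‖ ≤
            ‖∑ j ∈ Finset.Icc (i - (m : ℤ) - 1) (i - 1), b j • w (j + 1)‖) →
        (∀ i, x i =
          (1 - β (i - 1)) • ∑ j ∈ Finset.Icc (i - (m : ℤ) - 1) (i - 1), α i j • x j +
          β (i - 1) • ∑ j ∈ Finset.Icc (i - (m : ℤ) - 1) (i - 1), α i j • g (x j)) →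
        (∀ n, w n ≠ 0) →
        (∀ n, w n ≠ w (n - 1)) →
        ∀ k : ℤ,
        (∀ j ∈ Finset.Icc (k - (m : ℤ) - 1) (k - 1), |α k j| ≤ M) →
        (∀ j ∈ Finset.Icc (k - (m : ℤ)) k, |α (k + 1) j| ≤ M) →
        c ≤ |α k (k - 1)| →
        c ≤ |α (k + 1) k| →
        c ≤ |1 - α k (k - (m : ℤ) - 1)| →
        ‖w (k + 1)‖ ≤
          (‖∑ j ∈ Finset.Icc (k - (m : ℤ) - 1) (k - 1), α k j • w (j + 1)‖ / ‖w k‖) *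
            ((1 - β (k - 1)) + κ * β (k - 1)) * ‖w k‖ +
          C * ∑ j ∈ Finset.range (m + 1), ‖w (k - (j : ℤ))‖ ^ 2 := by
  set A := 1 + (1 + ((m : ℝ) + 1) * M) * (2 / (1 - κ))
  have hA : 0 < A := by have := sub_pos.2 hκ1; positivity
  refine ⟨κh * ((m : ℝ) + 1) ^ 2 * M * A ^ 2, by positivity, ?_⟩
  intro X _ _ _ g hg hg' hg'' hcon x w α β hw hβ hαsum hopt hx hw0 _ k hαM _ _ _ _
  set I := Icc (k - (m : ℤ) - 1) (k - 1)
  set S := ∑ j ∈ range (m + 1), ‖w (k - j)‖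
  have hres (j : ℤ) : g (x j) - x j = w (j + 1) := by simp [hw]
  have hβ0 : 0 ≤ β (k - 1) := (hβ _).1.le
  have hW : ‖∑ j ∈ I, α k j • w (j + 1)‖ ≤ ‖w k‖ := by
    simpa using norm_sum_smul_le_of_forall_sum_eq_one_le (hopt k) (i := k - 1) (by simp)
  have hnear (j : ℤ) (hj : j ∈ I) : ‖x j - x k‖ ≤ A * S :=
    (norm_sub_le_of_mem_Icc_of_eq_andersonMix hκ1 hcon hw (hαsum k) hαM hβ0 (hβ _).2 (hx k) hW
      hj).trans_eq (by ring)
  have hrem := sum_abs_mul_le_of_le_mul_sq_sum I (range (m + 1)) (L := κh * A ^ 2)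
    (by positivity) hM.le hαM fun j hj => ⟨norm_nonneg _,
      (norm_sub_sub_fderiv_le_of_norm_fderiv_fderiv_le hg hκh.le hg'' _ _).trans
        (by rw [mul_assoc, ← mul_pow]; gcongr; exact hnear j hj)⟩
  rw [card_Icc_sub_sub_one, card_range, Nat.cast_succ] at hrem
  have hstep := norm_sub_le_of_eq_andersonMix (hαsum k) x hβ0 (hβ _).2 (hx k)
    (fderiv ℝ g (x k)) (hg' (x k))
  simp only [hres] at hstep
  rw [mul_right_comm, div_mul_cancel₀ _ (norm_ne_zero_iff.2 (hw0 k))]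
  linarith

/-- Proposition (convergence of the residual with general depth `m ≥ 1`).
For all `κ, κ̂, M, c` with `0 < κ < 1`, `κ̂, M, c > 0` there is a constant
`C = C(m, κ, κ̂, M, c) > 0` such that for any Anderson(m)-generated sequence (for a `C²`,
contractive `g` with `‖g'‖ ≤ κ`, `‖g''‖ ≤ κ̂`) whose optimization coefficients at levels
`k` and `k+1` are bounded by `M`, with `|α^k_{k-1}|, |α^{k+1}_k|, |1 - α^k_{k-m-1}| ≥ c`,
`‖w_{k+1}‖ ≤ θ_k ((1-β_{k-1}) + κ β_{k-1}) ‖w_k‖ + C Σ_{j=0}^{m} ‖w_{k-j}‖²`. -/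
theorem stmt_19 (m : ℕ) (hm : 1 ≤ m) (κ κh M c : ℝ) (hκ0 : 0 < κ) (hκ1 : κ < 1)
    (hκh : 0 < κh) (hM : 0 < M) (hc : 0 < c) :
    ∃ C : ℝ, 0 < C ∧
      ∀ (X : Type) [NormedAddCommGroup X] [InnerProductSpace ℝ X] [CompleteSpace X],
      ∀ g : X → X,
        ContDiff ℝ 2 g →
        (∀ y u : X, ‖fderiv ℝ g y u‖ ≤ κ * ‖u‖) →
        (∀ y u v : X, ‖fderiv ℝ (fderiv ℝ g) y u v‖ ≤ κh * ‖u‖ * ‖v‖) →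
        (∀ x y : X, ‖g y - g x‖ ≤ κ * ‖x - y‖) →
        ∀ (x w : ℤ → X) (α : ℤ → ℤ → ℝ) (β : ℤ → ℝ),
        (∀ n, w n = g (x (n - 1)) - x (n - 1)) →
        (∀ i, 0 < β i ∧ β i ≤ 1) →
        (∀ i, ∑ j ∈ Finset.Icc (i - (m : ℤ) - 1) (i - 1), α i j = 1) →
        (∀ (i : ℤ) (b : ℤ → ℝ), ∑ j ∈ Finset.Icc (i - (m : ℤ) - 1) (i - 1), b j = 1 →
          ‖∑ j ∈ Finset.Icc (i - (m : ℤ) - 1) (i - 1), α i j • w (j + 1)‖ ≤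
            ‖∑ j ∈ Finset.Icc (i - (m : ℤ) - 1) (i - 1), b j • w (j + 1)‖) →
        (∀ i, x i =
          (1 - β (i - 1)) • ∑ j ∈ Finset.Icc (i - (m : ℤ) - 1) (i - 1), α i j • x j +
          β (i - 1) • ∑ j ∈ Finset.Icc (i - (m : ℤ) - 1) (i - 1), α i j • g (x j)) →
        (∀ n, w n ≠ 0) →
        (∀ n, w n ≠ w (n - 1)) →
        ∀ k : ℤ,
        (∀ j ∈ Finset.Icc (k - (m : ℤ) - 1) (k - 1), |α k j| ≤ M) →
        (∀ j ∈ Finset.Icc (k - (m : ℤ)) k, |α (k + 1) j| ≤ M) →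
        c ≤ |α k (k - 1)| →
        c ≤ |α (k + 1) k| →
        c ≤ |1 - α k (k - (m : ℤ) - 1)| →
        ‖w (k + 1)‖ ≤
          (‖∑ j ∈ Finset.Icc (k - (m : ℤ) - 1) (k - 1), α k j • w (j + 1)‖ / ‖w k‖) *
            ((1 - β (k - 1)) + κ * β (k - 1)) * ‖w k‖ +
          C * ∑ j ∈ Finset.range (m + 1), ‖w (k - (j : ℤ))‖ ^ 2 :=
  stmt_19_general m κ κh M c hκ1 hκh hM
end
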